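/- Let (W,b) be an n-player linear influence game in which player i is non-absolutely-indifferent ((w_i, b_i) ≠ 0) and every player j ≠ i is absolutely indifferent ((w_j, b_j) = 0). Then the number of pure-strategy Nash equilibria satisfies |NE(W,b)| = 2^{n−1} + ∑_{x_{−i} ∈ {−1,+1}^{n−1}} 1[ w_iᵀ x_{−i} − b_i = 0 ]. -/
import Mathlib

open Finset
open scoped Classical BigOperators

noncomputable def cubeF (ι : Type) [Fintype ι] : Finset (ι → ℝ) :=
  (Finset.univ : Finset (ι → Bool)).image (fun s i => if s i then (1 : ℝ) else -1)

noncomputable def cube (n : ℕ) : Finset (Fin n → ℝ) := cubeF (Fin n)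

noncomputable def ligNE (n : ℕ) (W : Fin n → Fin n → ℝ) (b : Fin n → ℝ) :
    Finset (Fin n → ℝ) :=
  (cube n).filter (fun x => ∀ i, 0 ≤ x i * ((∑ j ∈ Finset.univ.erase i, W i j * x j) - b i))

lemma sigma_inj {ι : Type} : Function.Injective
    (fun s : ι → Bool => fun j => if s j then (1:ℝ) else -1) := by
  intro s t h
  funext j
  have h' := congrFun h j
  by_cases hs : s j <;> by_cases ht : t j <;> simp [hs, ht] at h' ⊢ <;> norm_num at h'

lemma two_ite (r : ℝ) :
    (if (0:ℝ) ≤ 1 * r then (1:ℕ) else 0) + (if (0:ℝ) ≤ -1 * r then 1 else 0)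
      = 1 + if r = 0 then 1 else 0 := by
  rcases lt_trichotomy r 0 with h | h | h
  · simp [not_le.mpr h, h.le, h.ne]
  · simp [h]
  · simp [not_le.mpr h, h.le, h.ne']

/-- in a linear influence game where player `i` is non-absolutely-indifferent
and all other players are absolutely indifferent,
`|NE(W,b)| = 2^{n−1} + ∑_{x_{−i} ∈ {-1,+1}^{n−1}} 1[w_iᵀ x_{−i} − b_i = 0]`. -/
theorem stmt13 (n : ℕ) (W : Fin n → Fin n → ℝ) (b : Fin n → ℝ)
    (hdiag : ∀ i, W i i = 0) (i : Fin n)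
    (hi : ¬((∀ j, j ≠ i → W i j = 0) ∧ b i = 0))
    (hj : ∀ j, j ≠ i → (∀ k, W j k = 0) ∧ b j = 0) :
    (ligNE n W b).card =
      2 ^ (n - 1) +
        ∑ y ∈ cubeF {j : Fin n // j ≠ i},
          (if (∑ j : {j : Fin n // j ≠ i}, W i (j : Fin n) * y j) - b i = 0 then 1 else 0) := by
  classical
  set f : (Fin n → Bool) → (Fin n → ℝ) := fun s j => if s j then (1:ℝ) else -1 with hf
  set g : ({j : Fin n // j ≠ i} → Bool) → ({j : Fin n // j ≠ i} → ℝ) :=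
    fun s j => if s j then (1:ℝ) else -1 with hg
  set p : (Fin n → ℝ) → Prop :=
    fun x => 0 ≤ x i * ((∑ j ∈ Finset.univ.erase i, W i j * x j) - b i) with hp
  -- simplify the NE condition to just player i's
  have hNE : ligNE n W b = (cube n).filter p := by
    unfold ligNE
    apply Finset.filter_congr
    intro x hx
    constructor
    · intro h; exact h i
    · intro h j
      by_cases hji : j = i
      · subst hji; exact h
      · obtain ⟨h1, h2⟩ := hj j hji
        simp [h1, h2]
  set S : ({j : Fin n // j ≠ i} → Bool) → ℝ :=
    fun t => (∑ j : {j : Fin n // j ≠ i}, W i (j : Fin n) * g t j) - b i with hS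
  set e := Equiv.funSplitAt i Bool with he
  have hval : ∀ (c : Bool) (t : {j : Fin n // j ≠ i} → Bool) (j : {j : Fin n // j ≠ i}),
      f (e.symm (c, t)) (j : Fin n) = g t j := by
    intro c t j
    simp [hf, hg, he, Equiv.funSplitAt, Equiv.piSplitAt, j.2]
  have hvi : ∀ (c : Bool) (t : {j : Fin n // j ≠ i} → Bool),
      f (e.symm (c, t)) i = if c then (1:ℝ) else -1 := by
    intro c t
    simp [hf, he, Equiv.funSplitAt, Equiv.piSplitAt]
  have key : ∀ (c : Bool) (t : {j : Fin n // j ≠ i} → Bool),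
      (∑ j ∈ Finset.univ.erase i, W i j * f (e.symm (c, t)) j) - b i = S t := by
    intro c t
    have hmem : ∀ j : Fin n, j ∈ Finset.univ.erase i ↔ j ≠ i := by
      intro j; simp [Finset.mem_erase]
    rw [Finset.sum_subtype (Finset.univ.erase i) hmem
      (fun j => W i j * f (e.symm (c, t)) j)]
    simp only [hS]
    congr 1
    exact Finset.sum_congr rfl (fun j _ => by rw [hval c t j])
  -- count
  have hcube : cube n = (Finset.univ : Finset (Fin n → Bool)).image f := by
    unfold cube cubeF; rw [hf]; congr!
  have hcard : ((cube n).filter p).card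
      = ∑ s : Fin n → Bool, (if p (f s) then 1 else 0) := by
    rw [hcube, Finset.filter_image, Finset.card_image_of_injective _ sigma_inj,
      Finset.card_filter]
  have hsplit : ∑ s : Fin n → Bool, (if p (f s) then (1:ℕ) else 0)
      = ∑ t : {j : Fin n // j ≠ i} → Bool, (1 + if S t = 0 then 1 else 0) := by
    rw [← Equiv.sum_comp e.symm (fun s => if p (f s) then (1:ℕ) else 0),
      Fintype.sum_prod_type]
    rw [Finset.sum_comm]
    refine Finset.sum_congr rfl (fun t _ => ?_)
    rw [Fintype.sum_bool]
    simp only [hp, key, hvi]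
    simpa using two_ite (S t)
  have hcardT : Fintype.card {j : Fin n // j ≠ i} = n - 1 := by
    have := Fintype.card_subtype_compl (fun j : Fin n => j = i)
    simpa [Fintype.card_subtype_eq] using this
  have hRHS : ∑ y ∈ cubeF {j : Fin n // j ≠ i},
      (if (∑ j : {j : Fin n // j ≠ i}, W i (j : Fin n) * y j) - b i = 0 then (1:ℕ) else 0)
      = ∑ t : {j : Fin n // j ≠ i} → Bool, (if S t = 0 then 1 else 0) := by
    unfold cubeF
    rw [Finset.sum_image (fun a _ c _ h => sigma_inj h)]
    refine Finset.sum_congr (by congr!) fun t _ => rfl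
  rw [hNE, hcard, hsplit, Finset.sum_add_distrib, hRHS]
  simp [Finset.card_univ, hcardT]
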